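/- arXiv:1508.06425 — 2 statements merged into one kernel-verified Lean document; each statement's English description precedes it below -/
import Mathlib

section
/- Let ℓ₀, ℓ₁, ℓ₂ > 0 satisfy |ℓ₁ − ℓ₂| ≤ ℓ₀ ≤ ℓ₁ + ℓ₂, let m := (ℓ₁ + ℓ₂ − ℓ₀)/2, and let θ₀ := arccos((cosh ℓ₁ · cosh ℓ₂ − cosh ℓ₀)/(sinh ℓ₁ · sinh ℓ₂)) ∈ [0, π]. Then ℓ₁ − m ≥ ℓ₁ · sin²(θ₀/2). (This is Lemma 2.1(a) of the paper for curvature −1: in a geodesic triangle with vertices x₀, x₁, x₂ in the hyperbolic plane, the Gromov product satisfies (x₀|x₂)_{x₁} ≥ d(x₀,x₁)·sin²(θ₀/2), where θ₀ is the angle at x₀.) -/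
/-!
Write the sides in terms of the Gromov products at the three vertices: `ℓ₀ = u + v`,
`ℓ₁ = u + m`, `ℓ₂ = v + m` with `u, v, m ≥ 0`. In these coordinates the law of cosines becomes
`sin²(θ₀/2) = (1 - cos θ₀)/2 = sinh u sinh v / (sinh ℓ₁ sinh ℓ₂)`. The claim `ℓ₁ sin²(θ₀/2) ≤ u`
then follows from `sinh v ≤ sinh ℓ₂` and `ℓ₁ sinh u ≤ u sinh ℓ₁`, the latter because `sinh` is
convex on `[0, ∞)` and vanishes at `0`.
-/

namespace Real

lemma convexOn_sinh : ConvexOn ℝ (Set.Ici 0) sinh := by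
  refine MonotoneOn.convexOn_of_deriv (convex_Ici 0) continuous_sinh.continuousOn
    differentiable_sinh.differentiableOn ?_
  rw [deriv_sinh, interior_Ici]
  intro x hx y hy hxy
  rw [cosh_le_cosh, abs_of_pos hx, abs_of_pos hy]
  exact hxy

lemma mul_sinh_le_mul_sinh {u ℓ : ℝ} (hu : 0 ≤ u) (huℓ : u ≤ ℓ) :
    ℓ * sinh u ≤ u * sinh ℓ := by
  rcases hu.eq_or_lt with rfl | hu
  · simp
  rcases huℓ.eq_or_lt with rfl | huℓ
  · rfl
  have h := convexOn_sinh.secant_mono_aux1 (Set.mem_Ici.2 le_rfl)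
    (Set.mem_Ici.2 (hu.trans huℓ).le) hu huℓ
  simpa using h

lemma sin_sq_half_arccos {c : ℝ} (hc₁ : -1 ≤ c) (hc₂ : c ≤ 1) :
    sin (arccos c / 2) ^ 2 = (1 - c) / 2 := by
  have h := cos_two_mul_eq_one_sub (arccos c / 2)
  rw [mul_div_cancel₀ _ two_ne_zero, cos_arccos hc₁ hc₂] at h
  linarith

lemma cosh_add_mul_cosh_add_sub_cosh_add (u v m : ℝ) :
    cosh (u + m) * cosh (v + m) - cosh (u + v) =
      sinh (u + m) * sinh (v + m) - 2 * sinh u * sinh v := by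
  simp only [cosh_add, sinh_add]
  linear_combination (cosh u * cosh v - sinh u * sinh v) * cosh_sq_sub_sinh_sq m

lemma sin_sq_half_arccos_hyperbolic {u v m : ℝ} (hu : 0 ≤ u) (hv : 0 ≤ v) (hm : 0 ≤ m)
    (hum : 0 < u + m) (hvm : 0 < v + m) :
    sin (arccos ((cosh (u + m) * cosh (v + m) - cosh (u + v)) / (sinh (u + m) * sinh (v + m)))
      / 2) ^ 2 = sinh u * sinh v / (sinh (u + m) * sinh (v + m)) := by
  set S := sinh (u + m) * sinh (v + m)
  have hS : 0 < S := mul_pos (sinh_pos_iff.2 hum) (sinh_pos_iff.2 hvm)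
  have hq₀ : 0 ≤ sinh u * sinh v := mul_nonneg (sinh_nonneg_iff.2 hu) (sinh_nonneg_iff.2 hv)
  have hqS : sinh u * sinh v ≤ S :=
    mul_le_mul (sinh_le_sinh.2 (by linarith)) (sinh_le_sinh.2 (by linarith))
      (sinh_nonneg_iff.2 hv) (sinh_nonneg_iff.2 hum.le)
  have hc :
      (cosh (u + m) * cosh (v + m) - cosh (u + v)) / S = 1 - 2 * (sinh u * sinh v / S) := by
    rw [cosh_add_mul_cosh_add_sub_cosh_add]
    field_simp
    ring
  have hr₀ : 0 ≤ sinh u * sinh v / S := div_nonneg hq₀ hS.le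
  have hr₁ : sinh u * sinh v / S ≤ 1 := (div_le_one hS).2 hqS
  rw [hc, sin_sq_half_arccos (by linarith) (by linarith)]
  ring

end Real

open Real

theorem gromov_product_ge_sin_sq_general (ℓ₀ ℓ₁ ℓ₂ m θ₀ : ℝ)
    (h₁ : 0 < ℓ₁) (h₂ : 0 < ℓ₂)
    (htri₁ : |ℓ₁ - ℓ₂| ≤ ℓ₀) (htri₂ : ℓ₀ ≤ ℓ₁ + ℓ₂)
    (hm : m = (ℓ₁ + ℓ₂ - ℓ₀) / 2)
    (hθ : θ₀ = arccos ((cosh ℓ₁ * cosh ℓ₂ - cosh ℓ₀) / (sinh ℓ₁ * sinh ℓ₂))) :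
    ℓ₁ - m ≥ ℓ₁ * sin (θ₀ / 2) ^ 2 := by
  obtain ⟨u, v, rfl, rfl, rfl⟩ : ∃ u v, ℓ₀ = u + v ∧ ℓ₁ = u + m ∧ ℓ₂ = v + m :=
    ⟨ℓ₁ - m, ℓ₂ - m, by rw [hm]; ring, by ring, by ring⟩
  obtain ⟨hvu, huv⟩ := abs_le.1 htri₁
  have hu : 0 ≤ u := by linarith
  have hv : 0 ≤ v := by linarith
  have hm₀ : 0 ≤ m := by linarith
  have hS : 0 < sinh (u + m) * sinh (v + m) := mul_pos (sinh_pos_iff.2 h₁) (sinh_pos_iff.2 h₂)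
  rw [hθ, sin_sq_half_arccos_hyperbolic hu hv hm₀ h₁ h₂, add_sub_cancel_right, ge_iff_le,
    mul_div_assoc', div_le_iff₀ hS]
  calc (u + m) * (sinh u * sinh v) = (u + m) * sinh u * sinh v := by ring
    _ ≤ u * sinh (u + m) * sinh v :=
      mul_le_mul_of_nonneg_right (mul_sinh_le_mul_sinh hu (by linarith)) (sinh_nonneg_iff.2 hv)
    _ ≤ u * sinh (u + m) * sinh (v + m) :=
      mul_le_mul_of_nonneg_left (sinh_le_sinh.2 (by linarith))
        (mul_nonneg hu (sinh_nonneg_iff.2 h₁.le))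
    _ = u * (sinh (u + m) * sinh (v + m)) := by ring

/-- Lemma 2.1(a) of the paper for curvature `-1`: in a geodesic triangle of the hyperbolic
plane with side lengths `ℓ₀, ℓ₁, ℓ₂`, angle `θ₀` opposite to the side `ℓ₀`, and Gromov
product `m = (ℓ₁ + ℓ₂ - ℓ₀)/2`, one has `ℓ₁ - m ≥ ℓ₁ · sin²(θ₀/2)`. -/
theorem gromov_product_ge_sin_sq (ℓ₀ ℓ₁ ℓ₂ m θ₀ : ℝ)
    (h₀ : 0 < ℓ₀) (h₁ : 0 < ℓ₁) (h₂ : 0 < ℓ₂)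
    (htri₁ : |ℓ₁ - ℓ₂| ≤ ℓ₀) (htri₂ : ℓ₀ ≤ ℓ₁ + ℓ₂)
    (hm : m = (ℓ₁ + ℓ₂ - ℓ₀) / 2)
    (hθ : θ₀ = arccos ((cosh ℓ₁ * cosh ℓ₂ - cosh ℓ₀) / (sinh ℓ₁ * sinh ℓ₂))) :
    ℓ₁ - m ≥ ℓ₁ * sin (θ₀ / 2) ^ 2 :=
  gromov_product_ge_sin_sq_general ℓ₀ ℓ₁ ℓ₂ m θ₀ h₁ h₂ htri₁ htri₂ hm hθ
end

section
/- Let ℓ₀, ℓ₁, ℓ₂ > 0 satisfy |ℓ₁ − ℓ₂| ≤ ℓ₀ ≤ ℓ₁ + ℓ₂, let m := (ℓ₁ + ℓ₂ − ℓ₀)/2, and let θ₀ := arccos((cosh ℓ₁ · cosh ℓ₂ − cosh ℓ₀)/(sinh ℓ₁ · sinh ℓ₂)) ∈ [0, π]. If ℓ₁ − m ≥ 1 and ℓ₂ − m ≥ 1, then θ₀ ≥ exp(−m). (This is Lemma 2.1(c) of the paper for curvature −1: if the Gromov products (x₀|x₁)_{x₂} and (x₀|x₂)_{x₁} are both at least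 1, then the angle at x₀ is at least e^{−(x₁|x₂)_{x₀}}.) -/
/-!
Write `a = ℓ₁ - m` and `b = ℓ₂ - m`, so that `ℓ₁ = a + m`, `ℓ₂ = b + m` and `ℓ₀ = a + b`.
The law of cosines then reads `1 - cos θ₀ = 2 sinh a sinh b / (sinh ℓ₁ sinh ℓ₂)`.
For `a, b ≥ 1` we have `sinh a ≥ eᵃ / 4`, while `sinh ℓ ≤ e^ℓ / 2`, so
`1 - cos θ₀ ≥ e^{-2m} / 2`, and `cos t ≥ 1 - t² / 2` turns this into `θ₀ ≥ e^{-m}`.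
-/

open Real

theorem cosh_add_sub_cosh_sub (a b : ℝ) : cosh (a + b) - cosh (a - b) = 2 * sinh a * sinh b := by
  rw [cosh_add, cosh_sub]
  ring

theorem sinh_le_exp_div_two (x : ℝ) : sinh x ≤ exp x / 2 := by
  rw [sinh_eq]
  linarith [exp_pos (-x)]

theorem exp_div_four_le_sinh {x : ℝ} (hx : 1 ≤ x) : exp x / 4 ≤ sinh x := by
  have h_two_le : 2 ≤ exp (2 * x) := by linarith [add_one_le_exp (2 * x)]
  have h_exp_neg : exp (-x) * exp (2 * x) = exp x := by rw [← exp_add]; ring_nf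
  rw [sinh_eq]
  nlinarith [exp_pos (-x)]

theorem le_arccos_of_le_one_sub_sq_div_two {t x : ℝ} (ht₀ : 0 ≤ t) (htπ : t ≤ π)
    (hx : x ≤ 1 - t ^ 2 / 2) : t ≤ arccos x :=
  calc t = arccos (cos t) := (arccos_cos ht₀ htπ).symm
    _ ≤ arccos x := arccos_le_arccos (hx.trans one_sub_sq_div_two_le_cos)

section GromovProducts

variable {a b m : ℝ}

theorem sinh_mul_sinh_sub_law_of_cosines (a b m : ℝ) :
    sinh (a + m) * sinh (b + m) - (cosh (a + m) * cosh (b + m) - cosh (a + b))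
      = 2 * sinh a * sinh b := by
  rw [← cosh_add_sub_cosh_sub, ← add_sub_add_right_eq_sub a b m, cosh_sub]
  ring

theorem exp_neg_sq_mul_sinh_mul_sinh_le (hm : 0 ≤ m) (ha : 1 ≤ a) (hb : 1 ≤ b) :
    exp (-m) ^ 2 * (sinh (a + m) * sinh (b + m)) ≤ 4 * sinh a * sinh b := by
  have hsinh_nonneg : 0 ≤ sinh (b + m) := sinh_nonneg_iff.mpr (by linarith)
  calc exp (-m) ^ 2 * (sinh (a + m) * sinh (b + m))
      ≤ exp (-m) ^ 2 * (exp (a + m) / 2 * (exp (b + m) / 2)) := by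
        gcongr
        exacts [sinh_le_exp_div_two _, sinh_le_exp_div_two _]
    _ = 4 * (exp a / 4) * (exp b / 4) := by
        rw [exp_add, exp_add, exp_neg]
        field_simp
        norm_num
    _ ≤ 4 * sinh a * sinh b := by
        gcongr
        exacts [exp_div_four_le_sinh ha, exp_div_four_le_sinh hb]

theorem exp_neg_le_arccos_law_of_cosines (hm : 0 ≤ m) (ha : 1 ≤ a) (hb : 1 ≤ b) :
    exp (-m) ≤
      arccos ((cosh (a + m) * cosh (b + m) - cosh (a + b)) / (sinh (a + m) * sinh (b + m))) := by
  have hexp_le_one : exp (-m) ≤ 1 := exp_le_one_iff.mpr (by linarith)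
  have hsinh_pos : 0 < sinh (a + m) * sinh (b + m) :=
    mul_pos (sinh_pos_iff.mpr (by linarith)) (sinh_pos_iff.mpr (by linarith))
  refine le_arccos_of_le_one_sub_sq_div_two (exp_pos _).le
    (hexp_le_one.trans (by linarith [pi_gt_three])) ?_
  rw [div_le_iff₀ hsinh_pos]
  linarith [sinh_mul_sinh_sub_law_of_cosines a b m, exp_neg_sq_mul_sinh_mul_sinh_le hm ha hb]

end GromovProducts

theorem angle_ge_exp_neg_gromov_general (ℓ₀ ℓ₁ ℓ₂ m θ₀ : ℝ)
    (htri₂ : ℓ₀ ≤ ℓ₁ + ℓ₂)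
    (hm : m = (ℓ₁ + ℓ₂ - ℓ₀) / 2)
    (hθ : θ₀ = arccos ((cosh ℓ₁ * cosh ℓ₂ - cosh ℓ₀) / (sinh ℓ₁ * sinh ℓ₂)))
    (hg₁ : 1 ≤ ℓ₁ - m) (hg₂ : 1 ≤ ℓ₂ - m) :
    θ₀ ≥ exp (-m) := by
  have hm_nonneg : 0 ≤ m := by rw [hm]; linarith
  have hℓ₀ : ℓ₀ = (ℓ₁ - m) + (ℓ₂ - m) := by rw [hm]; ring
  have key := exp_neg_le_arccos_law_of_cosines hm_nonneg hg₁ hg₂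
  rw [sub_add_cancel, sub_add_cancel, ← hℓ₀] at key
  rw [hθ]
  exact key

/-- Lemma 2.1(c) of the paper for curvature `-1`: if the Gromov products `ℓ₁ - m` and
`ℓ₂ - m` at the two other vertices are both at least `1`, then the angle `θ₀` at the vertex
is at least `e^{-m}`, where `m` is the Gromov product at that vertex. -/
theorem angle_ge_exp_neg_gromov (ℓ₀ ℓ₁ ℓ₂ m θ₀ : ℝ)
    (h₀ : 0 < ℓ₀) (h₁ : 0 < ℓ₁) (h₂ : 0 < ℓ₂)
    (htri₁ : |ℓ₁ - ℓ₂| ≤ ℓ₀) (htri₂ : ℓ₀ ≤ ℓ₁ + ℓ₂)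
    (hm : m = (ℓ₁ + ℓ₂ - ℓ₀) / 2)
    (hθ : θ₀ = arccos ((cosh ℓ₁ * cosh ℓ₂ - cosh ℓ₀) / (sinh ℓ₁ * sinh ℓ₂)))
    (hg₁ : 1 ≤ ℓ₁ - m) (hg₂ : 1 ≤ ℓ₂ - m) :
    θ₀ ≥ exp (-m) :=
  angle_ge_exp_neg_gromov_general ℓ₀ ℓ₁ ℓ₂ m θ₀ htri₂ hm hθ hg₁ hg₂
end
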